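/- With X, f, X_f := X/(1+X·f) as above and Ψ(z) := Φ_X^{f(z)}(z) locally holomorphic, the time-1 maps satisfy Ψ ∘ Δ_f = Δ ∘ Ψ, where Δ_f is the time-1 map of X_f and Δ that of X. -/

import Mathlib

/-! Along the orbit `γ` of `X_f = R / (1 + R f')`, the clock `τ t = t + f (γ 0) - f (γ t)` runs
at speed `1 - f' γ' = 1 / (1 + R f')`, so `t ↦ Φ (τ t) (γ 0)` solves the same locally Lipschitz
ODE as `γ` and therefore equals it. Hence `γ 1 = Φ (1 + f (γ 0) - f (γ 1)) (γ 0)`, and the flow property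
`Φ s ∘ Φ t = Φ (s + t)` turns `Φ (f (γ 1)) (γ 1)` into `Φ 1 (Φ (f (γ 0)) (γ 0))`. The flow property
itself follows from uniqueness along the real ray `x ↦ x s`. -/

open Set

theorem ODE_solution_unique_smul_of_locallyLipschitz {𝕜 E : Type*} [NormedField 𝕜]
    [NormedAddCommGroup E] [NormedSpace 𝕜 E] [NormedSpace ℝ E]
    {v : E → E} (hv : LocallyLipschitz v) {c : ℝ → 𝕜} {a b : ℝ}
    (hc : ContinuousOn c (Icc a b)) {f g : ℝ → E}
    (hf : ∀ t ∈ Icc a b, HasDerivAt f (c t • v (f t)) t)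
    (hg : ∀ t ∈ Icc a b, HasDerivAt g (c t • v (g t)) t) (ha : f a = g a) :
    EqOn f g (Icc a b) := by
  have hfc : ContinuousOn f (Icc a b) := fun t ht => (hf t ht).continuousAt.continuousWithinAt
  have hgc : ContinuousOn g (Icc a b) := fun t ht => (hg t ht).continuousAt.continuousWithinAt
  set s := f '' Icc a b ∪ g '' Icc a b
  obtain ⟨K, hK⟩ := hv.locallyLipschitzOn.exists_lipschitzOnWith_of_compact
    ((isCompact_Icc.image_of_continuousOn hfc).union (isCompact_Icc.image_of_continuousOn hgc))
  obtain ⟨C, hC⟩ := isCompact_Icc.exists_bound_of_continuousOn hc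
  have hV (t : ℝ) (ht : t ∈ Icc a b) :
      LipschitzOnWith (C.toNNReal * K) (fun y => c t • v y) s := by
    refine ((lipschitzWith_smul (c t)).comp_lipschitzOnWith hK).weaken (mul_le_mul_left ?_ K)
    rw [← norm_toNNReal]
    exact Real.toNNReal_le_toNNReal (hC t ht)
  exact ODE_solution_unique_of_mem_Icc_right (fun t ht => hV t (Ico_subset_Icc_self ht))
    hfc (fun t ht => (hf t (Ico_subset_Icc_self ht)).hasDerivWithinAt)
    (fun t ht => .inl (mem_image_of_mem f (Ico_subset_Icc_self ht)))
    hgc (fun t ht => (hg t (Ico_subset_Icc_self ht)).hasDerivWithinAt)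
    (fun t ht => .inr (mem_image_of_mem g (Ico_subset_Icc_self ht))) ha

section Flow

variable {R : ℂ → ℂ} {Φ : ℂ → ℂ → ℂ}

theorem hasDerivAt_flow_comp (hflow : ∀ z t : ℂ, HasDerivAt (fun s => Φ s z) (R (Φ t z)) t)
    (z : ℂ) {τ : ℝ → ℂ} {τ' : ℂ} {x : ℝ} (hτ : HasDerivAt τ τ' x) :
    HasDerivAt (fun x => Φ (τ x) z) (τ' • R (Φ (τ x) z)) x := by
  rw [smul_eq_mul, mul_comm]
  exact (hflow z (τ x)).comp x hτ

theorem flow_add (hR : Differentiable ℂ R) (hinit : ∀ z : ℂ, Φ 0 z = z)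
    (hflow : ∀ z t : ℂ, HasDerivAt (fun s => Φ s z) (R (Φ t z)) t) (s t z : ℂ) :
    Φ s (Φ t z) = Φ (s + t) z := by
  have hray (c : ℂ) (x : ℝ) : HasDerivAt (fun x : ℝ => (x : ℂ) * s + c) s x := by
    simpa using ((hasDerivAt_id x).ofReal_comp.mul_const s).add_const c
  have key := ODE_solution_unique_smul_of_locallyLipschitz hR.contDiff.locallyLipschitz
    continuousOn_const (fun x _ => hasDerivAt_flow_comp hflow (Φ t z) (hray 0 x))
    (fun x _ => hasDerivAt_flow_comp hflow z (hray t x)) (by simp [hinit])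
    (right_mem_Icc.2 zero_le_one)
  simpa using key

end Flow

theorem eqOn_flow_reparam_of_hasDerivAt {R f : ℂ → ℂ} {Φ : ℂ → ℂ → ℂ} (hR : Differentiable ℂ R)
    (hinit : ∀ z : ℂ, Φ 0 z = z)
    (hflow : ∀ z t : ℂ, HasDerivAt (fun s => Φ s z) (R (Φ t z)) t)
    {U : Set ℂ} (hU : IsOpen U) (hf : DifferentiableOn ℂ f U)
    (hden : ∀ z ∈ U, 1 + R z * deriv f z ≠ 0) {γ : ℝ → ℂ} {a b : ℝ}
    (hmem : ∀ t ∈ Icc a b, γ t ∈ U)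
    (hode : ∀ t ∈ Icc a b, HasDerivAt γ (R (γ t) / (1 + R (γ t) * deriv f (γ t))) t) :
    EqOn γ (fun t => Φ (↑(t - a) + f (γ a) - f (γ t)) (γ a)) (Icc a b) := by
  set D : ℝ → ℂ := fun t => 1 + R (γ t) * deriv f (γ t)
  have hγc : ContinuousOn γ (Icc a b) := fun t ht => (hode t ht).continuousAt.continuousWithinAt
  have hDc : ContinuousOn (fun t => (D t)⁻¹) (Icc a b) := by
    refine ContinuousOn.inv₀ ?_ fun t ht => hden _ (hmem t ht)
    exact continuousOn_const.add ((hR.continuous.comp_continuousOn hγc).mul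
      ((hf.analyticOnNhd hU).deriv.continuousOn.comp hγc hmem))
  have htime (t : ℝ) (ht : t ∈ Icc a b) :
      HasDerivAt (fun t : ℝ => ↑(t - a) + f (γ a) - f (γ t)) (D t)⁻¹ t := by
    have hfγ := (hf.differentiableAt (hU.mem_nhds (hmem t ht))).hasDerivAt.comp t (hode t ht)
    have hclock := (((hasDerivAt_id t).sub_const a).ofReal_comp.add_const (f (γ a))).sub hfγ
    refine hclock.congr_deriv ?_
    rw [Complex.ofReal_one, mul_div_assoc', sub_eq_iff_eq_add, inv_eq_one_div, ← add_div,
      mul_comm (deriv f _), div_self (hden _ (hmem t ht))]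
  refine ODE_solution_unique_smul_of_locallyLipschitz hR.contDiff.locallyLipschitz hDc
    (fun t ht => ?_) (fun t ht => hasDerivAt_flow_comp hflow (γ a) (htime t ht)) (by simp [hinit])
  rw [smul_eq_mul, inv_mul_eq_div]
  exact hode t ht

theorem stmt6_general (U : Set ℂ) (hU : IsOpen U) (R f : ℂ → ℂ) (Φ : ℂ → ℂ → ℂ)
    (hR : Differentiable ℂ R)
    (hf : DifferentiableOn ℂ f U)
    (hden : ∀ z ∈ U, 1 + R z * deriv f z ≠ 0)
    (hinit : ∀ z : ℂ, Φ 0 z = z)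
    (hflow : ∀ z t : ℂ, HasDerivAt (fun s => Φ s z) (R (Φ t z)) t)
    (γ : ℝ → ℂ)
    (hmem : ∀ t ∈ Icc (0 : ℝ) 1, γ t ∈ U)
    (hode : ∀ t ∈ Icc (0 : ℝ) 1,
      HasDerivAt γ (R (γ t) / (1 + R (γ t) * deriv f (γ t))) t) :
    Φ (f (γ 1)) (γ 1) = Φ 1 (Φ (f (γ 0)) (γ 0)) := by
  have hγ₁ : γ 1 = Φ (1 + f (γ 0) - f (γ 1)) (γ 0) := by
    simpa using eqOn_flow_reparam_of_hasDerivAt hR hinit hflow hU hf hden hmem hode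
      (right_mem_Icc.2 zero_le_one)
  calc Φ (f (γ 1)) (γ 1) = Φ (f (γ 1)) (Φ (1 + f (γ 0) - f (γ 1)) (γ 0)) := by rw [← hγ₁]
    _ = Φ (1 + f (γ 0)) (γ 0) := by rw [flow_add hR hinit hflow]; ring_nf
    _ = Φ 1 (Φ (f (γ 0)) (γ 0)) := (flow_add hR hinit hflow _ _ _).symm

/-- With `X_f := X/(1 + X·f)` and `Ψ(z) := Φ_X^{f(z)}(z)` holomorphic, the time-1
maps satisfy `Ψ ∘ Δ_f = Δ ∘ Ψ`, where `Δ_f` is the time-1 map of `X_f` and `Δ = Φ_X^1`. -/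
theorem stmt6 (U : Set ℂ) (hU : IsOpen U) (R f : ℂ → ℂ) (Φ : ℂ → ℂ → ℂ)
    (hR : Differentiable ℂ R)
    (hf : DifferentiableOn ℂ f U)
    (hden : ∀ z ∈ U, 1 + R z * deriv f z ≠ 0)
    (hinit : ∀ z : ℂ, Φ 0 z = z)
    (hflow : ∀ z t : ℂ, HasDerivAt (fun s => Φ s z) (R (Φ t z)) t)
    (hΦz : ∀ t : ℂ, Differentiable ℂ fun z => Φ t z)
    (hΨ : DifferentiableOn ℂ (fun z => Φ (f z) z) U)
    (γ : ℝ → ℂ)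
    (hmem : ∀ t ∈ Icc (0 : ℝ) 1, γ t ∈ U)
    (hode : ∀ t ∈ Icc (0 : ℝ) 1,
      HasDerivAt γ (R (γ t) / (1 + R (γ t) * deriv f (γ t))) t) :
    Φ (f (γ 1)) (γ 1) = Φ 1 (Φ (f (γ 0)) (γ 0)) :=
  stmt6_general U hU R f Φ hR hf hden hinit hflow γ hmem hode
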